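/- Under the stated assumptions, for every k ≥ 0, every t_h ∈ I_h with t_h ≥ T − Mε − h − k(ε − 2h), and every x_h ∈ ℝ_h^n, one has V^{k+1}_{ε,h}(t_h,x_h) = V^k_{ε,h}(t_h,x_h). -/
import Mathlib


open Pointwise

/-- `FL^σ(x)`: the closure of the convex hull of `{(f(x,u), σ·L(x,u)) : u ∈ U}`. -/
def FLset {n m p : ℕ}
    (f : (Fin n → ℝ) → (Fin m → ℝ) → (Fin n → ℝ))
    (L : (Fin n → ℝ) → (Fin m → ℝ) → (Fin p → ℝ))
    (U : Set (Fin m → ℝ)) (σ : ℝ) (x : Fin n → ℝ) :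
    Set ((Fin n → ℝ) × (Fin p → ℝ)) :=
  closure (convexHull ℝ {q | ∃ u ∈ U, q = (f x u, σ • L x u)})

/-- The lattice `hℤ ⊆ ℝ`. -/
def latR (h : ℝ) : Set ℝ := {t | ∃ k : ℤ, t = k * h}

/-- The lattice of points of `ℝ^d` all of whose coordinates lie in `hℤ`. -/
def latV (h : ℝ) {d : ℕ} : Set (Fin d → ℝ) := {x | ∀ i, ∃ k : ℤ, x i = k * h}

/-- The nonnegative orthant `ℝ^p_+`. -/
def orthant (p : ℕ) : Set (Fin p → ℝ) := {z | ∀ i, 0 ≤ z i}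

/-- The Pareto optimal set `E(S)` of `S ⊆ ℝ^p` (w.r.t. `ℝ^p_+`). -/
def paretoE {p : ℕ} (S : Set (Fin p → ℝ)) : Set (Fin p → ℝ) :=
  {y₁ | y₁ ∈ S ∧ ¬ ∃ y₂ ∈ S, y₂ ≠ y₁ ∧ y₁ - y₂ ∈ orthant p}

/-- The set `S_k(t_h,x_h)` appearing in the multiobjective dynamic programming equation:
the union over `(f,l) ∈ FL⁺(x_h)`, `t̃_h ∈ (t_h + ε + [−2h,2h]) ∩ ℝ_h` and
`x̃_h ∈ (x_h + ε·f + α·B) ∩ ℝ_h^n` of the sets `((ε·l + α·B) ∩ ℝ_h^p) + V_k(t̃_h,x̃_h)`. -/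
def dynProgSet {n p : ℕ} (ε h α : ℝ)
    (FLp : (Fin n → ℝ) → Set ((Fin n → ℝ) × (Fin p → ℝ)))
    (Vk : ℝ → (Fin n → ℝ) → Set (Fin p → ℝ))
    (t : ℝ) (x : Fin n → ℝ) : Set (Fin p → ℝ) :=
  ⋃ fl ∈ FLp x, ⋃ t' ∈ Set.Icc (t + ε - 2 * h) (t + ε + 2 * h) ∩ latR h,
    ⋃ x' ∈ Metric.closedBall (x + ε • fl.1) α ∩ latV h,
      ((Metric.closedBall (ε • fl.2) α ∩ latV h) + Vk t' x')

/-- `Graph(V + ℝ^p_{h,+})`: the epigraph of a (finite-)set-valued map defined on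
`I_h × ℝ_h^n`, where `I_h = [−h, T+h] ∩ ℝ_h`. -/
def epiGraph {n p : ℕ} (T h : ℝ) (V : ℝ → (Fin n → ℝ) → Set (Fin p → ℝ)) :
    Set (ℝ × (Fin n → ℝ) × (Fin p → ℝ)) :=
  {q | q.1 ∈ Set.Icc (-h) (T + h) ∩ latR h ∧ q.2.1 ∈ latV h ∧
    q.2.2 ∈ V q.1 q.2.1 + (orthant p ∩ latV h)}

/-- The target set `H = {(t,x,z) : t ∈ [0,T], z ∈ −(T−t)·M̄_L·𝟏 + ℝ^p_+}`. -/
def Hset (n p : ℕ) (T MbarL : ℝ) : Set (ℝ × (Fin n → ℝ) × (Fin p → ℝ)) :=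
  {q | q.1 ∈ Set.Icc 0 T ∧ ∀ i, -(T - q.1) * MbarL ≤ q.2.2 i}

/-- The discrete target set `H_h = (H + h·B) ∩ (ℝ_h × ℝ_h^n × ℝ_h^p)`. -/
def Hseth (n p : ℕ) (T MbarL h : ℝ) : Set (ℝ × (Fin n → ℝ) × (Fin p → ℝ)) :=
  (Hset n p T MbarL + Metric.closedBall 0 h) ∩
    {q | q.1 ∈ latR h ∧ q.2.1 ∈ latV h ∧ q.2.2 ∈ latV h}

/-- For every `k ≥ 0`, every `t_h ∈ I_h` with `t_h ≥ T − Mε − h − k(ε − 2h)`, and every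
`x_h ∈ ℝ_h^n`, one has `V^{k+1}_{ε,h}(t_h,x_h) = V^k_{ε,h}(t_h,x_h)`. -/
theorem approxValue_stabilizes {n m p : ℕ}
    (f : (Fin n → ℝ) → (Fin m → ℝ) → (Fin n → ℝ))
    (L : (Fin n → ℝ) → (Fin m → ℝ) → (Fin p → ℝ))
    (U : Set (Fin m → ℝ)) (hUne : U.Nonempty) (hUc : IsCompact U)
    (hf : ContinuousOn (fun q : (Fin n → ℝ) × (Fin m → ℝ) => f q.1 q.2) (Set.univ ×ˢ U))
    (hL : ContinuousOn (fun q : (Fin n → ℝ) × (Fin m → ℝ) => L q.1 q.2) (Set.univ ×ˢ U))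
    (Kf KL : ℝ) (hKf : 0 ≤ Kf) (hKL : 0 ≤ KL)
    (Mf ML : ℝ) (hMf : 0 < Mf) (hML : 0 ≤ ML)
    (hfLip : ∀ u ∈ U, ∀ x₁ x₂ : Fin n → ℝ, ‖f x₁ u - f x₂ u‖ ≤ Kf * ‖x₁ - x₂‖)
    (hLLip : ∀ u ∈ U, ∀ x₁ x₂ : Fin n → ℝ, ‖L x₁ u - L x₂ u‖ ≤ KL * ‖x₁ - x₂‖)
    (hfBdd : ∀ (x : Fin n → ℝ), ∀ u ∈ U, ‖f x u‖ ≤ Mf)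
    (hLBdd : ∀ (x : Fin n → ℝ), ∀ u ∈ U, ‖L x u‖ ≤ ML)
    (K M : ℝ) (hK : K = max Kf KL) (hM : M = max 1 (max Mf ML))
    (T : ℝ) (hT : 0 < T) (ε h : ℝ) (hh : 0 < h) (hεh : 2 * h < ε - 2 * h)
    (hTh : ∃ k : ℕ, T = k * h)
    (α : ℝ) (hα : α = 2 * h + ε * h * K + ε ^ 2 * K * M)
    (MbarL : ℝ) (hMbarL : ML < MbarL)
    (hkey : ε * ML + α ≤ (ε - 2 * h) * MbarL)
    (V : ℕ → ℝ → (Fin n → ℝ) → Set (Fin p → ℝ))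
    (hVfin : ∀ k t x, (V k t x).Finite)
    (hVlat : ∀ k t x, V k t x ⊆ latV h)
    (hV0graph : epiGraph T h (V 0) = Hseth n p T MbarL h)
    (hV0val : ∀ t x, t ∈ Set.Icc (-h) (T + h) ∩ latR h → h ≤ t → x ∈ latV h →
      V 0 t x = {fun _ => -(T + h - t) * MbarL - h})
    (hVrec : ∀ (k : ℕ) (t : ℝ) (x : Fin n → ℝ),
      (t < T - M * ε - h →
        V (k + 1) t x = paretoE (dynProgSet ε h α (FLset f L U 1) (V k) t x)) ∧
      (¬ t < T - M * ε - h → V (k + 1) t x = V k t x)) :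
    ∀ (k : ℕ) (t : ℝ), t ∈ Set.Icc (-h) (T + h) ∩ latR h →
      T - M * ε - h - k * (ε - 2 * h) ≤ t →
      ∀ x ∈ latV h, V (k + 1) t x = V k t x := by
  have hε : 0 < ε := by linarith
  have hM1 : 1 ≤ M := by rw [hM]; exact le_max_left _ _
  have hMε : ε ≤ M * ε := le_mul_of_one_le_left hε.le hM1
  intro k
  induction k with
  | zero =>
    intro t ht hge x hx
    apply (hVrec 0 t x).2
    push_neg
    simpa using hge
  | succ k ih =>
    intro t ht hge x hx
    by_cases hc : t < T - M * ε - h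
    · rw [(hVrec (k+1) t x).1 hc, (hVrec k t x).1 hc]
      apply congrArg paretoE
      unfold dynProgSet
      apply Set.iUnion₂_congr
      intro fl _
      apply Set.iUnion₂_congr
      intro t' ht'
      apply Set.iUnion₂_congr
      intro x' hx'
      congr 1
      have htl : t + ε - 2 * h ≤ t' := ht'.1.1
      have htu : t' ≤ t + ε + 2 * h := ht'.1.2
      apply ih t' _ _ x' hx'.2
      · refine ⟨⟨by linarith [ht.1.1], by linarith⟩, ht'.2⟩
      · push_cast at hge ⊢
        linarith
    · exact (hVrec (k+1) t x).2 hc
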